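/- Let q ≥ 2 be an integer, ρ ∈ (0,1), and let α = (α_1,…,α_q) be a feasible vector. If there exist indices 1 ≤ i and k ≥ 2 with i+k ≤ q such that α_i > 0 and α_{i+k} > 0, then there exists a feasible vector α' with Σ_{j=1}^q α'_j·log₂ j > Σ_{j=1}^q α_j·log₂ j; in particular α does not maximize the objective Σ_{j=1}^q α_j·log₂ j over feasible vectors. -/

import Mathlib

/-!
Moving mass `ε` from the two entries `a` and `b ≥ a + 2` to their inner neighbours `a + 1` and
`b - 1` preserves both linear constraints, while strict concavity of the logarithm,
`a * b < (a + 1) * (b - 1)`, makes the objective grow by a positive multiple of `ε`.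
With `ε = min (α a) (α b)` the perturbed vector stays nonnegative.
-/

/-- A vector `α = (α 1, …, α q)` (indexed `1,…,q`) is feasible for `q` and `ρ` if all
entries are nonnegative, they sum to `1`, and `Σ_{i=1}^q i·α_i = 2/ρ − 1`. -/
def Feasible (q : ℕ) (ρ : ℝ) (α : ℕ → ℝ) : Prop :=
  (∀ i ∈ Finset.Icc 1 q, 0 ≤ α i) ∧
  (∑ i ∈ Finset.Icc 1 q, α i = 1) ∧
  (∑ i ∈ Finset.Icc 1 q, (i : ℝ) * α i = 2 / ρ - 1)

/-- The objective `Σ_{i=1}^q α_i · log₂ i`. -/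
noncomputable def objective (q : ℕ) (α : ℕ → ℝ) : ℝ :=
  ∑ i ∈ Finset.Icc 1 q, α i * Real.logb 2 i

theorem Real.logb_add_logb_lt_logb_add_one_add_logb_sub_one {c x y : ℝ} (hc : 1 < c)
    (hx : 0 < x) (hxy : x + 1 < y) :
    Real.logb c x + Real.logb c y < Real.logb c (x + 1) + Real.logb c (y - 1) := by
  rw [← Real.logb_mul hx.ne' (by linarith), ← Real.logb_mul (by linarith) (by linarith)]
  exact Real.logb_lt_logb hc (by nlinarith) (by nlinarith)

def pinch (a b j : ℕ) : ℝ :=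
  (if j = a + 1 then 1 else 0) + (if j = b - 1 then 1 else 0)
    - (if j = a then 1 else 0) - (if j = b then 1 else 0)

section Pinch

variable {a b : ℕ}

theorem sum_mul_pinch {s : Finset ℕ} (ha : a ∈ s) (ha' : a + 1 ∈ s) (hb' : b - 1 ∈ s)
    (hb : b ∈ s) (f : ℕ → ℝ) :
    ∑ j ∈ s, f j * pinch a b j = f (a + 1) + f (b - 1) - f a - f b := by
  simp only [pinch, mul_add, mul_sub, mul_ite, mul_one, mul_zero, Finset.sum_add_distrib,
    Finset.sum_sub_distrib, Finset.sum_ite_eq', ha, ha', hb', hb, if_true]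

theorem pinch_nonneg {j : ℕ} (hja : j ≠ a) (hjb : j ≠ b) : 0 ≤ pinch a b j := by
  unfold pinch
  split_ifs <;> norm_num

theorem neg_one_le_pinch (hab : a ≠ b) (j : ℕ) : -1 ≤ pinch a b j := by
  unfold pinch
  split_ifs <;> first | omega | norm_num

variable {q : ℕ} (ha : 1 ≤ a) (hab : a + 2 ≤ b) (hb : b ≤ q)
include ha hab hb

theorem sum_Icc_mul_pinch (f : ℕ → ℝ) :
    ∑ j ∈ Finset.Icc 1 q, f j * pinch a b j = f (a + 1) + f (b - 1) - f a - f b :=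
  sum_mul_pinch (by simp; omega) (by simp; omega) (by simp; omega) (by simp; omega) f

theorem Feasible.add_mul_pinch {ρ : ℝ} {α : ℕ → ℝ} (hα : Feasible q ρ α) {ε : ℝ}
    (hε : 0 ≤ ε) (hεa : ε ≤ α a) (hεb : ε ≤ α b) :
    Feasible q ρ (fun j => α j + ε * pinch a b j) := by
  obtain ⟨hnonneg, hsum, hmean⟩ := hα
  have hsum_pinch := sum_Icc_mul_pinch ha hab hb (fun _ => 1)
  have hmean_pinch := sum_Icc_mul_pinch ha hab hb (fun j => (j : ℝ))
  simp only [one_mul] at hsum_pinch hmean_pinch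
  refine ⟨fun j hj => ?_, ?_, ?_⟩
  · have := neg_one_le_pinch (show a ≠ b by omega) j
    by_cases hja : j = a
    · subst hja; nlinarith
    by_cases hjb : j = b
    · subst hjb; nlinarith
    nlinarith [pinch_nonneg hja hjb, hnonneg j hj]
  · rw [Finset.sum_add_distrib, ← Finset.mul_sum, hsum_pinch, hsum]
    ring
  · simp only [mul_add, Finset.sum_add_distrib, mul_left_comm _ ε, ← Finset.mul_sum,
      hmean_pinch, hmean]
    push_cast [Nat.cast_pred (show 0 < b by omega)]
    ring

theorem objective_lt_add_mul_pinch (α : ℕ → ℝ) {ε : ℝ} (hε : 0 < ε) :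
    objective q α < objective q (fun j => α j + ε * pinch a b j) := by
  have hgain := Real.logb_add_logb_lt_logb_add_one_add_logb_sub_one one_lt_two
    (show (0 : ℝ) < a by exact_mod_cast ha) (show (a : ℝ) + 1 < b by exact_mod_cast hab)
  have hsum := sum_Icc_mul_pinch ha hab hb (fun j => Real.logb 2 j)
  push_cast [Nat.cast_pred (show 0 < b by omega)] at hsum
  have hsplit : objective q (fun j => α j + ε * pinch a b j)
      = objective q α + ε * ∑ j ∈ Finset.Icc 1 q, Real.logb 2 j * pinch a b j := by
    simp only [objective, add_mul, Finset.sum_add_distrib, Finset.mul_sum]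
    congr 1
    exact Finset.sum_congr rfl fun j _ => by ring
  rw [hsplit, hsum]
  nlinarith

end Pinch

theorem stmt10_general (q : ℕ) (ρ : ℝ)
    (α : ℕ → ℝ) (hα : Feasible q ρ α)
    (i k : ℕ) (hi : 1 ≤ i) (hk : 2 ≤ k) (hik : i + k ≤ q)
    (hαi : 0 < α i) (hαik : 0 < α (i + k)) :
    (∃ α' : ℕ → ℝ, Feasible q ρ α' ∧ objective q α < objective q α') ∧
    ¬ (∀ β : ℕ → ℝ, Feasible q ρ β → objective q β ≤ objective q α) := by
  have hab : i + 2 ≤ i + k := by omega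
  have hε : 0 < min (α i) (α (i + k)) := lt_min hαi hαik
  have hα' := hα.add_mul_pinch hi hab hik hε.le (min_le_left _ _) (min_le_right _ _)
  have hlt := objective_lt_add_mul_pinch hi hab hik α hε
  exact ⟨⟨_, hα', hlt⟩, fun hmax => (hmax _ hα').not_gt hlt⟩

theorem stmt10 (q : ℕ) (hq : 2 ≤ q) (ρ : ℝ) (hρ : ρ ∈ Set.Ioo (0 : ℝ) 1)
    (α : ℕ → ℝ) (hα : Feasible q ρ α)
    (i k : ℕ) (hi : 1 ≤ i) (hk : 2 ≤ k) (hik : i + k ≤ q)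
    (hαi : 0 < α i) (hαik : 0 < α (i + k)) :
    (∃ α' : ℕ → ℝ, Feasible q ρ α' ∧ objective q α < objective q α') ∧
    ¬ (∀ β : ℕ → ℝ, Feasible q ρ β → objective q β ≤ objective q α) :=
  stmt10_general q ρ α hα i k hi hk hik hαi hαik
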